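/- Let p > 2 fixed and consider K(s₀) = s₀(p-1)/(s₀^{1/(p-1)} − p + 2) as a function of s₀ ∈ ((p-2)^{p-1}, ∞). Then K attains its minimum value (p-1)^p at s₀ = (p-1)^{p-1}. -/
import Mathlib

/-- Tangent line inequality: for `p > 2` and `t > 0`,
`(p-1)^(p-1) * (t - p + 2) ≤ t^(p-1)`. -/
lemma tangent_key (p t : ℝ) (hp : 2 < p) (ht : 0 ≤ t) :
    (p - 1) ^ (p - 1) * (t - p + 2) ≤ t ^ (p - 1) := by
  have hp1 : (0 : ℝ) < p - 1 := by linarith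
  have hs : -1 ≤ t / (p - 1) - 1 := by
    have : 0 ≤ t / (p - 1) := div_nonneg ht hp1.le
    linarith
  have hb := one_add_mul_self_le_rpow_one_add hs (by linarith : (1:ℝ) ≤ p - 1)
  have h1 : 1 + (t / (p - 1) - 1) = t / (p - 1) := by ring
  rw [h1] at hb
  have h2 : (t / (p - 1)) ^ (p - 1) = t ^ (p - 1) / (p - 1) ^ (p - 1) :=
    Real.div_rpow ht hp1.le _
  rw [h2] at hb
  have h3 : 1 + (p - 1) * (t / (p - 1) - 1) = t - p + 2 := by
    field_simp
    ring
  rw [h3] at hb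
  have hpow : (0 : ℝ) < (p - 1) ^ (p - 1) := Real.rpow_pos_of_pos hp1 _
  calc (p - 1) ^ (p - 1) * (t - p + 2)
      ≤ (p - 1) ^ (p - 1) * (t ^ (p - 1) / (p - 1) ^ (p - 1)) := by
        exact mul_le_mul_of_nonneg_left hb hpow.le
    _ = t ^ (p - 1) := by field_simp

theorem stmt_19 (p : ℝ) (hp : 2 < p) :
    (∀ s₀ : ℝ, (p - 2) ^ (p - 1) < s₀ →
      (p - 1) ^ p ≤ s₀ * (p - 1) / (s₀ ^ (1 / (p - 1)) - p + 2)) ∧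
    (p - 2 : ℝ) ^ (p - 1) < (p - 1 : ℝ) ^ (p - 1) ∧
    ((p - 1 : ℝ) ^ (p - 1)) * (p - 1) /
        (((p - 1 : ℝ) ^ (p - 1)) ^ (1 / (p - 1)) - p + 2) = (p - 1) ^ p := by
  have hp2 : (0 : ℝ) < p - 2 := by linarith
  have hp1 : (0 : ℝ) < p - 1 := by linarith
  have hexp : (p - 1) * (1 / (p - 1)) = 1 := mul_one_div_cancel hp1.ne'
  refine ⟨?_, ?_, ?_⟩
  · intro s₀ hs₀
    have hs₀pos : 0 < s₀ := lt_trans (Real.rpow_pos_of_pos hp2 _) hs₀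
    set t := s₀ ^ (1 / (p - 1)) with ht
    have htpow : t ^ (p - 1) = s₀ := by
      rw [ht, ← Real.rpow_mul hs₀pos.le, one_div_mul_cancel hp1.ne', Real.rpow_one]
    have htgt : p - 2 < t := by
      have := Real.rpow_lt_rpow (Real.rpow_pos_of_pos hp2 (p-1)).le hs₀
        (by positivity : (0:ℝ) < 1 / (p - 1))
      rwa [← Real.rpow_mul hp2.le, hexp, Real.rpow_one] at this
    have hd : 0 < t - p + 2 := by linarith
    rw [le_div_iff₀ hd]
    have hpp : (p - 1 : ℝ) ^ p = (p - 1) ^ (p - 1) * (p - 1) := by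
      have h := Real.rpow_add_one hp1.ne' (p - 1)
      simpa using h
    rw [hpp]
    have key := tangent_key p t hp (by linarith : (0:ℝ) ≤ t)
    rw [htpow] at key
    nlinarith [key, hd, hp1]
  · exact Real.rpow_lt_rpow hp2.le (by linarith) hp1
  · have h : ((p - 1 : ℝ) ^ (p - 1)) ^ (1 / (p - 1)) = p - 1 := by
      rw [← Real.rpow_mul hp1.le, hexp, Real.rpow_one]
    rw [h]
    have hd : p - 1 - p + 2 = 1 := by ring
    rw [hd, div_one, ← Real.rpow_add_one hp1.ne']
    norm_num
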